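/- Suppose Φ : (X, d^X, μ, T) → (Y, d^Y, ν, S) is a Borel factor map of compact model probability-preserving systems (Φ_*μ = ν and Φ ∘ T = S ∘ Φ μ-almost everywhere), and that α > 1, δ > 0 and κ > κ′ > 0. Then for every α₁ ∈ [1, α) there are κ₁ ∈ (κ′, κ) and δ₁ ∈ (0, δ) such that for all sufficiently large N, BICOV_{α₁,κ₁,κ′, δ₁·N}(X, d^X_{[-N;0)}, d^X_{[0;N)}, μ) ≥ BICOV_{α,κ,κ′, δ·N}(Y, d^Y_{[-N;0)}, d^Y_{[0;N)}, ν). -/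

import Mathlib

open MeasureTheory

/-- Open `δ`-neighbourhood of a set for a pseudometric. -/
def pball {X : Type*} (d : X → X → ℝ) (δ : ℝ) (F : Set X) : Set X :=
  {x' | ∃ x ∈ F, d x x' < δ}

/-- The `a`-partial `δ`-bi-covering number of the subset `U` of a pair-pseudometric
space, with respect to the measure `μ'`. -/
noncomputable def subBicov {X : Type*} [MeasurableSpace X]
    (d₁ d₂ : X → X → ℝ) (μ' : Measure X) (U : Set X) (a δ : ℝ) : ℕ∞ :=
  sInf {n : ℕ∞ | ∃ F : Finset X, ↑F ⊆ U ∧ (F.card : ℕ∞) = n ∧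
    ENNReal.ofReal a < μ' (U ∩ pball d₂ δ (U ∩ pball d₁ δ ↑F))}

/-- The bi-covering number profile `BICOV_{α,κ,κ′,δ}(X,d₁,d₂,μ)`. -/
noncomputable def BICOV {X : Type*} [MeasurableSpace X]
    (d₁ d₂ : X → X → ℝ) (μ : Measure X) (α κ κ' δ : ℝ) : ℕ∞ :=
  ⨅ (μ' : Measure X) (_ : IsProbabilityMeasure μ')
    (_ : ∀ A : Set X, MeasurableSet A → μ' A ≤ ENNReal.ofReal α * μ A),
    ⨆ (U : Set X) (_ : MeasurableSet U) (_ : ENNReal.ofReal κ ≤ μ' U),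
      subBicov d₁ d₂ μ' U κ' δ

/-- The marginal pseudometric `d^X_I(x,x′) := ∑_{n∈I} d(T^n x, T^n x′)`. -/
noncomputable def margMetric {X : Type*} [MetricSpace X] (T : Equiv.Perm X)
    (I : Finset ℤ) (x x' : X) : ℝ :=
  ∑ n ∈ I, dist ((T ^ n) x) ((T ^ n) x')

/-! On a compact set `K` of nearly full measure the factor map `Φ` is uniformly continuous
(a weak form of Lusin's theorem, obtained from a fine finite partition of `Y` and disjoint inner
compact approximations of its preimages). By Markov's inequality and the invariance of `μ`, most
points have an orbit segment over `[-N, N)` that visits `Kᶜ` at most `θ N` times; on this good set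
`Φ` maps `d^X_I`-balls of radius `δ₁ N` into `d^Y_I`-balls of radius `δ N` for both windows `I`.
Pushing an admissible `μ'` forward by `Φ` and intersecting preimages `Φ ⁻¹' V` with the good set
then turns every bi-covering of the intersection into a bi-covering of `V` with at most as many
centres. -/

open Set Metric Finset
open scoped ENNReal Function

section

variable {X Y : Type*}

section PBall

lemma pball_mono {d : X → X → ℝ} {δ : ℝ} {A B : Set X} (h : A ⊆ B) :
    pball d δ A ⊆ pball d δ B :=
  fun _ ⟨x, hx, hxx'⟩ => ⟨x, h hx, hxx'⟩

lemma mapsTo_inter_pball {d : X → X → ℝ} {e : Y → Y → ℝ} {Φ : X → Y} {U A : Set X} {V : Set Y}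
    {δ₁ δ : ℝ} (hUV : MapsTo Φ U V) (hAU : A ⊆ U)
    (hΦ : ∀ x ∈ U, ∀ x' ∈ U, d x x' < δ₁ → e (Φ x) (Φ x') < δ) :
    MapsTo Φ (U ∩ pball d δ₁ A) (V ∩ pball e δ (Φ '' A)) :=
  fun _ ⟨hx'U, x, hxA, hxx'⟩ =>
    ⟨hUV hx'U, Φ x, mem_image_of_mem Φ hxA, hΦ x (hAU hxA) _ hx'U hxx'⟩

end PBall

section Bicov

variable [MeasurableSpace X] [MeasurableSpace Y]

lemma subBicov_map_le {d₁ d₂ : X → X → ℝ} {e₁ e₂ : Y → Y → ℝ} {Φ : X → Y} (hΦ : Measurable Φ)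
    (μ' : Measure X) {U : Set X} {V : Set Y} (hUV : MapsTo Φ U V) {a δ₁ δ : ℝ}
    (hΦ₁ : ∀ x ∈ U, ∀ x' ∈ U, d₁ x x' < δ₁ → e₁ (Φ x) (Φ x') < δ)
    (hΦ₂ : ∀ x ∈ U, ∀ x' ∈ U, d₂ x x' < δ₁ → e₂ (Φ x) (Φ x') < δ) :
    subBicov e₁ e₂ (μ'.map Φ) V a δ ≤ subBicov d₁ d₂ μ' U a δ₁ := by
  classical
  refine le_sInf ?_
  rintro _ ⟨F, hFU, rfl, hF⟩
  have hcover : MapsTo Φ (U ∩ pball d₂ δ₁ (U ∩ pball d₁ δ₁ F))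
      (V ∩ pball e₂ δ (V ∩ pball e₁ δ ↑(F.image Φ))) := by
    refine (mapsTo_inter_pball hUV inter_subset_left hΦ₂).mono_right
      (inter_subset_inter_right _ (pball_mono ?_))
    rw [Finset.coe_image]
    exact (mapsTo_inter_pball hUV hFU hΦ₁).image_subset
  refine sInf_le_of_le ⟨F.image Φ, ?_, rfl, ?_⟩ (by exact_mod_cast Finset.card_image_le)
  · rw [Finset.coe_image]
    exact (hUV.mono_left hFU).image_subset
  · exact hF.trans_le ((measure_mono hcover.subset_preimage).trans
      (Measure.le_map_apply hΦ.aemeasurable _))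

theorem BICOV_map_le {d₁ d₂ : X → X → ℝ} {e₁ e₂ : Y → Y → ℝ} {μ : Measure X}
    [IsFiniteMeasure μ] {Φ : X → Y} (hΦ : Measurable Φ) {G : Set X} (hG : MeasurableSet G)
    {α α₁ κ κ₁ κ' δ δ₁ : ℝ} (hα : α₁ ≤ α) (hα₁ : 0 ≤ α₁) (hGc : κ₁ + α₁ * μ.real Gᶜ ≤ κ)
    (hΦ₁ : ∀ x ∈ G, ∀ x' ∈ G, d₁ x x' < δ₁ → e₁ (Φ x) (Φ x') < δ)
    (hΦ₂ : ∀ x ∈ G, ∀ x' ∈ G, d₂ x x' < δ₁ → e₂ (Φ x) (Φ x') < δ) :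
    BICOV e₁ e₂ (μ.map Φ) α κ κ' δ ≤ BICOV d₁ d₂ μ α₁ κ₁ κ' δ₁ := by
  refine le_iInf₂ fun μ' hμ' => le_iInf fun hμ'μ => ?_
  have hν' : ∀ B, MeasurableSet B → μ'.map Φ B ≤ ENNReal.ofReal α * μ.map Φ B := fun B hB => by
    rw [Measure.map_apply hΦ hB, Measure.map_apply hΦ hB]
    exact (hμ'μ _ (hΦ hB)).trans (by gcongr)
  refine iInf₂_le_of_le (μ'.map Φ) (Measure.isProbabilityMeasure_map hΦ.aemeasurable) <|
    iInf_le_of_le hν' <| iSup₂_le fun V hV => iSup_le fun hκV => ?_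
  have hGc' : μ' Gᶜ ≤ ENNReal.ofReal (κ - κ₁) := by
    refine (hμ'μ _ hG.compl).trans ?_
    rw [← ofReal_measureReal, ← ENNReal.ofReal_mul hα₁]
    exact ENNReal.ofReal_le_ofReal (by linarith)
  have hκ₁U : ENNReal.ofReal κ₁ ≤ μ' (Φ ⁻¹' V ∩ G) := by
    rw [Measure.map_apply hΦ hV] at hκV
    have hκ₁κ : 0 ≤ κ - κ₁ := by nlinarith [measureReal_nonneg (μ := μ) (s := Gᶜ)]
    calc ENNReal.ofReal κ₁ = ENNReal.ofReal κ - ENNReal.ofReal (κ - κ₁) := by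
          rw [← ENNReal.ofReal_sub _ hκ₁κ, sub_sub_cancel]
      _ ≤ μ' (Φ ⁻¹' V) - μ' Gᶜ := tsub_le_tsub hκV hGc'
      _ ≤ μ' (Φ ⁻¹' V ∩ G) := sdiff_compl (s := Φ ⁻¹' V) ▸ le_measure_sdiff
  refine le_iSup₂_of_le (Φ ⁻¹' V ∩ G) ((hΦ hV).inter hG) <| le_iSup_of_le hκ₁U ?_
  exact subBicov_map_le hΦ μ' (fun x hx => hx.1)
    (fun x hx x' hx' => hΦ₁ x hx.2 x' hx'.2) (fun x hx x' hx' => hΦ₂ x hx.2 x' hx'.2)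

end Bicov

section Lusin

lemma exists_measurableSet_partition_dist_lt [MetricSpace Y] [CompactSpace Y]
    [MeasurableSpace Y] [OpensMeasurableSpace Y] {r : ℝ} (hr : 0 < r) :
    ∃ (m : ℕ) (P : Fin m → Set Y), (∀ i, MeasurableSet (P i)) ∧ Pairwise (Disjoint on P) ∧
      (⋃ i, P i) = univ ∧ ∀ i, ∀ y ∈ P i, ∀ y' ∈ P i, dist y y' < r := by
  obtain ⟨t, ht⟩ := CompactSpace.elim_nhds_subcover (fun y : Y => ball y (r / 2))
    fun y => ball_mem_nhds y (half_pos hr)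
  set B : Fin t.card → Set Y := fun i => ball (t.equivFin.symm i : Y) (r / 2)
  refine ⟨t.card, disjointed B,
    fun i => disjointedRec (p := MeasurableSet) (fun _ _ hs => hs.diff measurableSet_ball)
      measurableSet_ball, disjoint_disjointed B, ?_, fun i y hy y' hy' => ?_⟩
  · rw [iUnion_disjointed, eq_univ_iff_forall]
    intro y
    obtain ⟨c, hc, hyc⟩ := mem_iUnion₂.1 (ht.ge (mem_univ y))
    exact mem_iUnion.2 ⟨t.equivFin ⟨c, hc⟩, by simpa [B] using hyc⟩
  · have hy := mem_ball.1 (disjointed_subset B i hy)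
    have hy' := mem_ball.1 (disjointed_subset B i hy')
    linarith [dist_triangle_right y y' (t.equivFin.symm i : Y)]

lemma exists_pos_forall_dist_lt_imp_eq {ι : Type*} [Finite ι] [MetricSpace X]
    {C : ι → Set X} (hC : ∀ i, IsCompact (C i)) (hdisj : Pairwise (Disjoint on C)) :
    ∃ ρ > 0, ∀ i j, ∀ x ∈ C i, ∀ x' ∈ C j, dist x x' < ρ → i = j := by
  set O : ι → Set X := fun i => (⋃ (j) (_ : j ≠ i), C j)ᶜ
  have hO : ∀ i, ∀ k, ∀ x ∈ C k, x ∈ O i ↔ k = i := fun i k x hx => by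
    refine ⟨fun hxO => by_contra fun hki => hxO (mem_iUnion₂_of_mem hki hx), ?_⟩
    rintro rfl
    simp only [O, mem_compl_iff, mem_iUnion, not_exists]
    exact fun j hji hxj => (hdisj hji).notMem_of_mem_left hxj hx
  obtain ⟨ρ, hρ, hball⟩ := lebesgue_number_lemma_of_metric (isCompact_iUnion hC)
    (fun i => (isClosed_iUnion_of_finite fun j =>
      isClosed_iUnion_of_finite fun _ => (hC j).isClosed).isOpen_compl)
    (iUnion_subset fun i x hx => mem_iUnion.2 ⟨i, (hO i i x hx).2 rfl⟩)
  refine ⟨ρ, hρ, fun i j x hx x' hx' hxx' => ?_⟩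
  obtain ⟨k, hk⟩ := hball x (mem_iUnion_of_mem i hx)
  rw [(hO k i x hx).1 (hk (mem_ball_self hρ)),
    (hO k j x' hx').1 (hk (mem_ball'.2 hxx'))]

theorem exists_isCompact_forall_dist_lt_of_measurable [MetricSpace X] [MeasurableSpace X]
    [OpensMeasurableSpace X] [MetricSpace Y] [CompactSpace Y] [MeasurableSpace Y]
    [OpensMeasurableSpace Y] {μ : Measure X} [IsFiniteMeasure μ] [μ.InnerRegularCompactLTTop]
    {Φ : X → Y} (hΦ : Measurable Φ) {η : ℝ≥0∞} (hη : η ≠ 0) {ε : ℝ} (hε : 0 < ε) :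
    ∃ K, IsCompact K ∧ μ Kᶜ ≤ η ∧
      ∃ ρ > 0, ∀ x ∈ K, ∀ x' ∈ K, dist x x' < ρ → dist (Φ x) (Φ x') < ε := by
  obtain ⟨m, P, hPm, hPd, hPU, hPε⟩ := exists_measurableSet_partition_dist_lt (Y := Y) hε
  have : ∀ i, ∃ C ⊆ Φ ⁻¹' P i, IsCompact C ∧ μ (Φ ⁻¹' P i \ C) < η / m := fun i =>
    (hΦ (hPm i)).exists_isCompact_sdiff_lt (measure_ne_top _ _)
      (ENNReal.div_pos hη (ENNReal.natCast_ne_top m)).ne'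
  choose C hCP hC hμC using this
  obtain ⟨ρ, hρ, hsep⟩ := exists_pos_forall_dist_lt_imp_eq hC
    fun i j hij => ((hPd hij).preimage Φ).mono (hCP i) (hCP j)
  refine ⟨⋃ i, C i, isCompact_iUnion hC, ?_, ρ, hρ, fun x hx x' hx' hxx' => ?_⟩
  · have hcover : (⋃ i, C i)ᶜ ⊆ ⋃ i, Φ ⁻¹' P i \ C i := fun x hx => by
      obtain ⟨i, hi⟩ := mem_iUnion.1 (hPU.ge (mem_univ (Φ x)))
      exact mem_iUnion.2 ⟨i, hi, fun hxC => hx (mem_iUnion_of_mem i hxC)⟩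
    calc μ (⋃ i, C i)ᶜ ≤ ∑ i, μ (Φ ⁻¹' P i \ C i) :=
          (measure_mono hcover).trans (measure_iUnion_fintype_le _ _)
      _ ≤ ∑ _i : Fin m, η / m := Finset.sum_le_sum fun i _ => (hμC i).le
      _ ≤ η := by simpa using ENNReal.mul_div_le
  · obtain ⟨i, hi⟩ := mem_iUnion.1 hx
    obtain ⟨j, hj⟩ := mem_iUnion.1 hx'
    obtain rfl := hsep i j x hi x' hj hxx'
    exact hPε i _ (hCP i hi) _ (hCP i hj)

end Lusin

section Orbits

def measurePreservingPerms [MeasurableSpace X] (μ : Measure X) : Subgroup (Equiv.Perm X) where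
  carrier := {T | MeasurePreserving T μ μ ∧ MeasurePreserving T.symm μ μ}
  mul_mem' hT hS := ⟨hT.1.comp hS.1, hS.2.comp hT.2⟩
  one_mem' := ⟨.id μ, .id μ⟩
  inv_mem' hT := ⟨hT.2, hT.1⟩

lemma measurePreserving_zpow_of_continuous [TopologicalSpace X] [CompactSpace X] [T2Space X]
    [MeasurableSpace X] [BorelSpace X] {μ : Measure X} {T : Equiv.Perm X} (hTc : Continuous T)
    (hT : MeasurePreserving T μ μ) (n : ℤ) : MeasurePreserving ⇑(T ^ n) μ μ :=
  have hT' : MeasurePreserving T.symm μ μ := hT.symm (hTc.homeoOfEquivCompactToT2).toMeasurableEquiv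
  (zpow_mem (show T ∈ measurePreservingPerms μ from ⟨hT, hT'⟩) n).1

lemma Equiv.Perm.apply_zpow_apply (T : Equiv.Perm X) (m : ℤ) (x : X) :
    T ((T ^ m) x) = (T ^ (m + 1)) x := by
  rw [← Equiv.Perm.mul_apply, mul_self_zpow, add_comm]

lemma map_zpow_apply_of_forall_map_apply {T : Equiv.Perm X} {S : Equiv.Perm Y} {Φ : X → Y}
    {x : X} (h : ∀ m : ℤ, Φ (T ((T ^ m) x)) = S (Φ ((T ^ m) x))) (n : ℤ) :
    Φ ((T ^ n) x) = (S ^ n) (Φ x) := by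
  induction n using Int.induction_on with
  | zero => rfl
  | succ m ih => rw [← T.apply_zpow_apply, h, ih, S.apply_zpow_apply]
  | pred m ih =>
    apply S.injective
    rw [← h, T.apply_zpow_apply, S.apply_zpow_apply, sub_add_cancel, ih]

lemma ae_forall_map_zpow_apply [MeasurableSpace X] {μ : Measure X} {T : Equiv.Perm X}
    {S : Equiv.Perm Y} {Φ : X → Y} (hT : ∀ n : ℤ, MeasurePreserving ⇑(T ^ n) μ μ)
    (h : ∀ᵐ x ∂μ, Φ (T x) = S (Φ x)) : ∀ᵐ x ∂μ, ∀ n : ℤ, Φ ((T ^ n) x) = (S ^ n) (Φ x) := by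
  have : ∀ᵐ x ∂μ, ∀ m : ℤ, Φ (T ((T ^ m) x)) = S (Φ ((T ^ m) x)) :=
    ae_all_iff.2 fun m => (hT m).quasiMeasurePreserving.ae h
  filter_upwards [this] with x hx using map_zpow_apply_of_forall_map_apply hx

end Orbits

section Counting

variable {ι Z : Type*} [MeasurableSpace X] [MeasurableSpace Z]

lemma mul_measureReal_le_card_mul {μ : Measure X} [IsFiniteMeasure μ] {ν : Measure Z}
    {f : ι → X → Z} (hf : ∀ i, MeasurePreserving (f i) μ ν) (J : Finset ι) {A : Set Z}
    (hA : MeasurableSet A) (c : ℝ) :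
    c * μ.real {x | c ≤ ∑ i ∈ J, A.indicator 1 (f i x)} ≤ #J * ν.real A := by
  have hind : ∀ i, Integrable (fun x => A.indicator (1 : Z → ℝ) (f i x)) μ := fun i =>
    (integrable_const (1 : ℝ)).indicator ((hf i).measurable hA)
  calc c * μ.real {x | c ≤ ∑ i ∈ J, A.indicator 1 (f i x)}
      ≤ ∫ x, ∑ i ∈ J, A.indicator 1 (f i x) ∂μ :=
        mul_meas_ge_le_integral_of_nonneg (ae_of_all _ fun _ => sum_nonneg fun _ _ =>
          indicator_nonneg (fun _ _ => zero_le_one) _) (integrable_finsetSum J fun i _ => hind i) c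
    _ = ∑ i ∈ J, ν.real A := by
        rw [integral_finsetSum J fun i _ => hind i]
        refine Finset.sum_congr rfl fun i _ => ?_
        rw [← (hf i).measureReal_preimage hA.nullMeasurableSet,
          ← integral_indicator_one ((hf i).measurable hA)]
        rfl
    _ = #J * ν.real A := by rw [Finset.sum_const, nsmul_eq_mul]

end Counting

section Distances

variable {ι : Type*} [PseudoMetricSpace X] [PseudoMetricSpace Y] {Φ : X → Y} {K : Set X}
  {ρ ε D : ℝ}

lemma dist_le_add_indicator_of_forall_dist_lt (hρ : 0 < ρ) (hε : 0 ≤ ε)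
    (hD : ∀ y y' : Y, dist y y' ≤ D)
    (hΦK : ∀ x ∈ K, ∀ x' ∈ K, dist x x' < ρ → dist (Φ x) (Φ x') < ε) (x x' : X) :
    dist (Φ x) (Φ x') ≤ ε + D * (Kᶜ.indicator 1 x + Kᶜ.indicator 1 x' + dist x x' / ρ) := by
  have hD0 : 0 ≤ D := dist_self (Φ x) ▸ hD _ _
  have hxx' : 0 ≤ dist x x' / ρ := by positivity
  by_cases hgood : x ∈ K ∧ x' ∈ K ∧ dist x x' < ρ
  · obtain ⟨hx, hx', hlt⟩ := hgood
    have := hΦK x hx x' hx' hlt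
    simp only [indicator_of_notMem (notMem_compl_iff.2 hx),
      indicator_of_notMem (notMem_compl_iff.2 hx'), zero_add]
    nlinarith
  · have h₁ : 0 ≤ Kᶜ.indicator (1 : X → ℝ) x := indicator_nonneg (fun _ _ => zero_le_one) _
    have h₂ : 0 ≤ Kᶜ.indicator (1 : X → ℝ) x' := indicator_nonneg (fun _ _ => zero_le_one) _
    have hone : 1 ≤ Kᶜ.indicator 1 x + Kᶜ.indicator 1 x' + dist x x' / ρ := by
      rcases not_and_or.1 hgood with hx | hgood
      · rw [indicator_of_mem (mem_compl hx), Pi.one_apply]; linarith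
      rcases not_and_or.1 hgood with hx' | hlt
      · rw [indicator_of_mem (mem_compl hx'), Pi.one_apply]; linarith
      · linarith [(one_le_div hρ).2 (not_lt.1 hlt)]
    nlinarith [hD (Φ x) (Φ x')]

lemma sum_dist_le_of_forall_dist_lt (hρ : 0 < ρ) (hε : 0 ≤ ε)
    (hD : ∀ y y' : Y, dist y y' ≤ D)
    (hΦK : ∀ x ∈ K, ∀ x' ∈ K, dist x x' < ρ → dist (Φ x) (Φ x') < ε) (I : Finset ι)
    (u v : ι → X) :
    ∑ i ∈ I, dist (Φ (u i)) (Φ (v i)) ≤ #I * ε + D * (∑ i ∈ I, Kᶜ.indicator 1 (u i) +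
      ∑ i ∈ I, Kᶜ.indicator 1 (v i) + (∑ i ∈ I, dist (u i) (v i)) / ρ) := by
  calc ∑ i ∈ I, dist (Φ (u i)) (Φ (v i))
      ≤ ∑ i ∈ I, (ε + D * (Kᶜ.indicator 1 (u i) + Kᶜ.indicator 1 (v i) + dist (u i) (v i) / ρ)) :=
        sum_le_sum fun i _ => dist_le_add_indicator_of_forall_dist_lt hρ hε hD hΦK _ _
    _ = _ := by
        simp only [sum_add_distrib, mul_add, mul_sum,
          sum_div, sum_const, nsmul_eq_mul]

end Distances

section MarginalMetric

variable [MetricSpace X] [MetricSpace Y] {T : Equiv.Perm X} {S : Equiv.Perm Y} {Φ : X → Y}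
  {K : Set X} {ρ ε D : ℝ}

lemma margMetric_le_of_map_zpow_apply (hρ : 0 < ρ) (hε : 0 ≤ ε) (hD : ∀ y y' : Y, dist y y' ≤ D)
    (hΦK : ∀ x ∈ K, ∀ x' ∈ K, dist x x' < ρ → dist (Φ x) (Φ x') < ε) (I : Finset ℤ) {x x' : X}
    (hx : ∀ n : ℤ, Φ ((T ^ n) x) = (S ^ n) (Φ x)) (hx' : ∀ n : ℤ, Φ ((T ^ n) x') = (S ^ n) (Φ x')) :
    margMetric S I (Φ x) (Φ x') ≤ #I * ε + D * (∑ n ∈ I, Kᶜ.indicator 1 ((T ^ n) x) +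
      ∑ n ∈ I, Kᶜ.indicator 1 ((T ^ n) x') + margMetric T I x x' / ρ) := by
  simp only [margMetric, ← hx, ← hx']
  exact sum_dist_le_of_forall_dist_lt hρ hε hD hΦK I _ _

-- The budget `δ N` is spent as `δ N / 2` on the times when both orbits are in `K` and close,
-- `δ N / 8` on the visits of each orbit to `Kᶜ`, and `δ N / 8` on the times with gap `≥ ρ`.
lemma margMetric_lt_of_map_zpow_apply {δ θ δ₁ : ℝ} (hρ : 0 < ρ) (hδ : 0 < δ)
    (hD : ∀ y y' : Y, dist y y' ≤ D)
    (hΦK : ∀ x ∈ K, ∀ x' ∈ K, dist x x' < ρ → dist (Φ x) (Φ x') < δ / 2)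
    (hθ : D * θ ≤ δ / 8) (hδ₁ : D * δ₁ ≤ ρ * δ / 8) {I J : Finset ℤ} (hIJ : I ⊆ J) {N : ℕ}
    (hI : #I = N) {x x' : X}
    (hx : ∀ n : ℤ, Φ ((T ^ n) x) = (S ^ n) (Φ x)) (hx' : ∀ n : ℤ, Φ ((T ^ n) x') = (S ^ n) (Φ x'))
    (hJx : ∑ n ∈ J, Kᶜ.indicator 1 ((T ^ n) x) < θ * N)
    (hJx' : ∑ n ∈ J, Kᶜ.indicator 1 ((T ^ n) x') < θ * N)
    (hxx' : margMetric T I x x' < δ₁ * N) :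
    margMetric S I (Φ x) (Φ x') < δ * N := by
  have hD0 : 0 ≤ D := dist_self (Φ x) ▸ hD _ _
  have hN : (0 : ℝ) < N := Nat.cast_pos.2 <| Nat.pos_of_ne_zero fun hN => by
    simp only [hN, Nat.cast_zero, mul_zero] at hxx'
    exact hxx'.not_ge (sum_nonneg fun _ _ => dist_nonneg)
  have hvisits : ∀ z, ∑ n ∈ J, Kᶜ.indicator 1 ((T ^ n) z) < θ * N →
      D * ∑ n ∈ I, Kᶜ.indicator 1 ((T ^ n) z) ≤ δ * N / 8 := fun z hz => by
    have hIJz := sum_le_sum_of_subset_of_nonneg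
      (f := fun n => Kᶜ.indicator (1 : X → ℝ) ((T ^ n) z)) hIJ fun n _ _ =>
      indicator_nonneg (fun _ _ => zero_le_one (α := ℝ)) ((T ^ n) z)
    nlinarith [mul_le_mul_of_nonneg_left (hIJz.trans hz.le) hD0]
  have hdist : D * (margMetric T I x x' / ρ) ≤ δ * N / 8 := by
    rw [← mul_div_assoc, div_le_iff₀ hρ]
    nlinarith [mul_le_mul_of_nonneg_left hxx'.le hD0]
  have := margMetric_le_of_map_zpow_apply hρ (half_pos hδ).le hD hΦK I hx hx'
  rw [hI] at this
  nlinarith [hvisits x hJx, hvisits x' hJx']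

end MarginalMetric

section FactorMaps

variable [MeasurableSpace X] {μ : Measure X} [IsFiniteMeasure μ] {T : Equiv.Perm X}

lemma mul_measureReal_compl_le {B K : Set X} (hT : ∀ n : ℤ, MeasurePreserving ⇑(T ^ n) μ μ)
    (hB : μ B = 0) (hK : MeasurableSet K) {θ : ℝ} (hθ : 0 < θ) {N : ℕ} (hN : 0 < N) :
    θ * μ.real (Bᶜ ∩ {x | ∑ n ∈ Ico (-(N : ℤ)) N, Kᶜ.indicator 1 ((T ^ n) x) < θ * N})ᶜ ≤
      2 * μ.real Kᶜ := by
  have hMarkov := mul_measureReal_le_card_mul hT (Ico (-(N : ℤ)) N) hK.compl (θ * N)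
  set visits : X → ℝ := fun x => ∑ n ∈ Ico (-(N : ℤ)) N, Kᶜ.indicator 1 ((T ^ n) x)
  have hcard : #(Ico (-(N : ℤ)) N) = 2 * N := by rw [Int.card_Ico]; omega
  rw [hcard, Nat.cast_mul, Nat.cast_ofNat] at hMarkov
  have hsub : (Bᶜ ∩ {x | visits x < θ * N})ᶜ ⊆ B ∪ {x | θ * N ≤ visits x} := fun x hx => by
    simpa [or_iff_not_imp_left] using hx
  have hμB : μ.real B = 0 := by rw [measureReal_def, hB, ENNReal.toReal_zero]
  have hGc := (measureReal_mono (μ := μ) hsub).trans (measureReal_union_le _ _)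
  rw [hμB, zero_add] at hGc
  refine le_of_mul_le_mul_right (a := (N : ℝ)) ?_ (Nat.cast_pos.2 hN)
  nlinarith [mul_le_mul_of_nonneg_left hGc (by positivity : (0 : ℝ) ≤ θ * N)]

theorem BICOV_margMetric_le_of_forall_dist_lt [MetricSpace X] [OpensMeasurableSpace X]
    [MetricSpace Y] [MeasurableSpace Y] {S : Equiv.Perm Y} {Φ : X → Y} (hΦ : Measurable Φ)
    (hT : ∀ n : ℤ, MeasurePreserving ⇑(T ^ n) μ μ)
    (hequiv : ∀ᵐ x ∂μ, ∀ n : ℤ, Φ ((T ^ n) x) = (S ^ n) (Φ x)) {K : Set X} (hK : MeasurableSet K)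
    {D ρ δ θ δ₁ α α₁ κ κ₁ κ' : ℝ} (hD : ∀ y y' : Y, dist y y' ≤ D) (hρ : 0 < ρ) (hδ : 0 < δ)
    (hΦK : ∀ x ∈ K, ∀ x' ∈ K, dist x x' < ρ → dist (Φ x) (Φ x') < δ / 2) (hθ : 0 < θ)
    (hDθ : D * θ ≤ δ / 8) (hDδ₁ : D * δ₁ ≤ ρ * δ / 8) (hα : α₁ ≤ α) (hα₁ : 0 ≤ α₁)
    (hμK : 2 * α₁ * μ.real Kᶜ ≤ θ * (κ - κ₁)) {N : ℕ} (hN : 0 < N) :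
    BICOV (margMetric S (Ico (-(N : ℤ)) 0)) (margMetric S (Ico (0 : ℤ) N)) (μ.map Φ) α κ κ'
        (δ * N)
      ≤ BICOV (margMetric T (Ico (-(N : ℤ)) 0)) (margMetric T (Ico (0 : ℤ) N)) μ α₁ κ₁ κ'
        (δ₁ * N) := by
  obtain ⟨B, hB, hBm, hμB⟩ := exists_measurable_superset_of_null (ae_iff.1 hequiv)
  have hequivB : ∀ x ∉ B, ∀ n : ℤ, Φ ((T ^ n) x) = (S ^ n) (Φ x) :=
    fun x hx => not_not.1 fun h => hx (hB h)
  set G := Bᶜ ∩ {x | ∑ n ∈ Ico (-(N : ℤ)) N, Kᶜ.indicator 1 ((T ^ n) x) < θ * N}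
  have hG : MeasurableSet G := hBm.compl.inter <| measurableSet_lt
    (Finset.measurable_sum _ fun n _ =>
      (measurable_const.indicator hK.compl).comp (hT n).measurable) measurable_const
  have hGc : κ₁ + α₁ * μ.real Gᶜ ≤ κ := by
    have := mul_measureReal_compl_le hT hμB hK hθ hN
    nlinarith [mul_le_mul_of_nonneg_left this hα₁]
  refine BICOV_map_le hΦ hG hα hα₁ hGc ?_ ?_ <;>
    rintro x ⟨hxB, hx⟩ x' ⟨hx'B, hx'⟩ hxx' <;>
    refine margMetric_lt_of_map_zpow_apply hρ hδ hD hΦK hDθ hDδ₁ ?_ (by simp)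
      (hequivB x hxB) (hequivB x' hx'B) hx hx' hxx'
  all_goals exact Ico_subset_Ico (by omega) (by omega)

end FactorMaps

end

theorem BICOV_mono_under_factor_general
    {X Y : Type*}
    [MetricSpace X] [CompactSpace X] [MeasurableSpace X] [BorelSpace X]
    [MetricSpace Y] [CompactSpace Y] [MeasurableSpace Y] [BorelSpace Y]
    (T : Equiv.Perm X) (hTc : Continuous ⇑T)
    (S : Equiv.Perm Y)
    (μ : Measure X) [IsProbabilityMeasure μ] (hT : MeasurePreserving ⇑T μ μ)
    (ν : Measure Y)
    (Φ : X → Y) (hΦ : Measurable Φ) (hmap : Measure.map Φ μ = ν)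
    (hequiv : ∀ᵐ x ∂μ, Φ (T x) = S (Φ x))
    (α δ κ κ' : ℝ) (hδ : 0 < δ) (hκ : κ' < κ) :
    ∀ α₁ : ℝ, 1 ≤ α₁ → α₁ < α →
      ∃ κ₁ : ℝ, κ' < κ₁ ∧ κ₁ < κ ∧
      ∃ δ₁ : ℝ, 0 < δ₁ ∧ δ₁ < δ ∧
      ∃ N₀ : ℕ, ∀ N : ℕ, N₀ ≤ N →
        BICOV (margMetric S (Finset.Ico (-(N : ℤ)) 0))
            (margMetric S (Finset.Ico (0 : ℤ) (N : ℤ))) ν α κ κ' (δ * N)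
          ≤ BICOV (margMetric T (Finset.Ico (-(N : ℤ)) 0))
              (margMetric T (Finset.Ico (0 : ℤ) (N : ℤ))) μ α₁ κ₁ κ' (δ₁ * N) := by
  intro α₁ hα₁ hα₁α
  have hTn := measurePreserving_zpow_of_continuous hTc hT
  obtain ⟨D, hD0, hD⟩ : ∃ D > 0, ∀ y y' : Y, dist y y' ≤ D :=
    ⟨Metric.diam (univ : Set Y) + 1, by positivity, fun y y' =>
      (Metric.dist_le_diam_of_mem isCompact_univ.isBounded trivial trivial).trans (by linarith)⟩
  obtain ⟨κ₁, hκ'κ₁, hκ₁κ⟩ := exists_between hκ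
  set θ := δ / (8 * D) with hθ
  have hη : 0 < θ * (κ - κ₁) / (2 * α₁) := by have := sub_pos.2 hκ₁κ; positivity
  obtain ⟨K, hK, hμK, ρ, hρ, hΦK⟩ := exists_isCompact_forall_dist_lt_of_measurable (μ := μ) hΦ
    (ENNReal.ofReal_pos.2 hη).ne' (half_pos hδ)
  set δ₁ := min (δ / 2) (ρ * δ / (8 * D))
  refine ⟨κ₁, hκ'κ₁, hκ₁κ, δ₁, lt_min (half_pos hδ) (by positivity),
    (min_le_left _ _).trans_lt (half_lt_self hδ), 1, fun N hN => ?_⟩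
  rw [← hmap]
  refine BICOV_margMetric_le_of_forall_dist_lt hΦ hTn (ae_forall_map_zpow_apply hTn hequiv)
    hK.isClosed.measurableSet hD hρ hδ hΦK (θ := θ) (by positivity)
    (le_of_eq (by rw [hθ]; field_simp)) ?_ hα₁α.le
    (by linarith) ?_ hN
  · calc D * δ₁ ≤ D * (ρ * δ / (8 * D)) := mul_le_mul_of_nonneg_left (min_le_right _ _) hD0.le
      _ = ρ * δ / 8 := by field_simp
  · have := ENNReal.toReal_le_of_le_ofReal hη.le hμK
    rw [← measureReal_def, le_div_iff₀ (by positivity)] at this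
    linarith

/-- **The bi-covering number profile is an isomorphism invariant**: it does not
increase under factor maps of compact model probability-preserving systems, after a
slight adjustment of the parameters. -/
theorem BICOV_mono_under_factor
    {X Y : Type*}
    [MetricSpace X] [CompactSpace X] [MeasurableSpace X] [BorelSpace X]
    [MetricSpace Y] [CompactSpace Y] [MeasurableSpace Y] [BorelSpace Y]
    (T : Equiv.Perm X) (hTc : Continuous ⇑T) (hTc' : Continuous ⇑T.symm)
    (S : Equiv.Perm Y) (hSc : Continuous ⇑S) (hSc' : Continuous ⇑S.symm)
    (μ : Measure X) [IsProbabilityMeasure μ] (hT : MeasurePreserving ⇑T μ μ)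
    (ν : Measure Y) [IsProbabilityMeasure ν] (hS : MeasurePreserving ⇑S ν ν)
    (Φ : X → Y) (hΦ : Measurable Φ) (hmap : Measure.map Φ μ = ν)
    (hequiv : ∀ᵐ x ∂μ, Φ (T x) = S (Φ x))
    (α δ κ κ' : ℝ) (hα : 1 < α) (hδ : 0 < δ) (hκ' : 0 < κ') (hκ : κ' < κ) :
    ∀ α₁ : ℝ, 1 ≤ α₁ → α₁ < α →
      ∃ κ₁ : ℝ, κ' < κ₁ ∧ κ₁ < κ ∧
      ∃ δ₁ : ℝ, 0 < δ₁ ∧ δ₁ < δ ∧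
      ∃ N₀ : ℕ, ∀ N : ℕ, N₀ ≤ N →
        BICOV (margMetric S (Finset.Ico (-(N : ℤ)) 0))
            (margMetric S (Finset.Ico (0 : ℤ) (N : ℤ))) ν α κ κ' (δ * N)
          ≤ BICOV (margMetric T (Finset.Ico (-(N : ℤ)) 0))
              (margMetric T (Finset.Ico (0 : ℤ) (N : ℤ))) μ α₁ κ₁ κ' (δ₁ * N) :=
  BICOV_mono_under_factor_general T hTc S μ hT ν Φ hΦ hmap hequiv α δ κ κ' hδ hκ
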